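/- arXiv:1112.2969 — 3 statements merged into one kernel-verified Lean document; each statement's English description precedes it below -/
import Mathlib

section
/- Let H be a cocommutative Hopf algebra over a field k, M an H-module, α ∈ H ⊗ H, and m ∈ M an element that is not torsion (i.e., hm = 0 implies h = 0 for h ∈ H). Then α ⊗_H m = 0 in (H ⊗ H) ⊗_H M if and only if α = 0. -/
/-!
The map `ψ(x ⊗ y) = x S(y₁) ⊗ y₂` is a left inverse of the Galois map `x ⊗ y ↦ x y₁ ⊗ y₂`
and satisfies `ψ(z Δ(h)) = ψ(z) (1 ⊗ h)`. Hence `(x ⊗ y) ⊗ n ↦ (id ⊗ (· • n)) (ψ (x ⊗ y))`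
kills the relations `z Δ(h) ⊗ n - z ⊗ h n` and descends from `(H ⊗ H) ⊗ M` to
`(H ⊗ H) ⊗_H M`. It sends `α ⊗ m` to `(id ⊗ (· • m)) (ψ α)`; when `m` is not torsion,
`id ⊗ (· • m)` is injective because `H` is flat over the field `k`, so `α ⊗ m = 0` forces
`ψ α = 0`, hence `α = 0`.
-/

open TensorProduct

/-- The submodule of relations defining `(H ⊗ H) ⊗_H M`, where `H ⊗ H` is a right
`H`-module via `α · h = α · Δ(h)`. -/
noncomputable def pseudoRel (k H M : Type*) [CommRing k] [Ring H] [HopfAlgebra k H]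
    [AddCommGroup M] [Module k M] [Module H M] [IsScalarTower k H M] :
    Submodule k ((H ⊗[k] H) ⊗[k] M) :=
  Submodule.span k {x | ∃ (α : H ⊗[k] H) (h : H) (m : M),
    x = (α * Coalgebra.comul (R := k) h) ⊗ₜ[k] m - α ⊗ₜ[k] (h • m)}

open Coalgebra HopfAlgebra LinearMap

namespace Bialgebra

variable {k H : Type*} [CommSemiring k] [Semiring H] [Bialgebra k H] {ι κ : Type*}

lemma sum_sum_tmul_eq_one_tmul {f : H ⊗[k] H →ₗ[k] H}
    (hf : f ∘ₗ comul = Algebra.linearMap k H ∘ₗ counit) {h : H} (r : Repr k h ι)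
    (c : ∀ i, Repr k (r.right i) κ) :
    ∑ i ∈ r.index, ∑ j ∈ (c i).index, f (r.left i ⊗ₜ (c i).left j) ⊗ₜ[k] (c i).right j
      = 1 ⊗ₜ h := by
  have coassoc := sum_tmul_tmul_eq r (fun i ↦ ℛ k (r.left i)) c
  apply_fun rTensor H f ∘ₗ (_root_.TensorProduct.assoc k H H H).symm.toLinearMap at coassoc
  simp only [map_sum, comp_apply, LinearEquiv.coe_coe, assoc_symm_tmul, rTensor_tmul] at coassoc
  rw [← coassoc]
  simp_rw [← sum_tmul, ← map_sum, (ℛ k _).eq, ← comp_apply, hf, comp_apply,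
    Algebra.linearMap_apply, Algebra.algebraMap_eq_smul_one, smul_tmul, ← tmul_sum,
    sum_counit_smul]

end Bialgebra

namespace HopfAlgebra

variable (k H : Type*) [CommSemiring k] [Semiring H] [HopfAlgebra k H]

def galoisMap : H ⊗[k] H →ₗ[k] H ⊗[k] H :=
  rTensor H (mul' k H) ∘ₗ (TensorProduct.assoc k H H H).symm.toLinearMap ∘ₗ lTensor H comul

def galoisMapInv : H ⊗[k] H →ₗ[k] H ⊗[k] H :=
  rTensor H (mul' k H) ∘ₗ (TensorProduct.assoc k H H H).symm.toLinearMap ∘ₗ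
    lTensor H (rTensor H (antipode k) ∘ₗ comul)

variable {k H} {ι κ : Type*}

lemma galoisMap_tmul (x y : H) (r : Repr k y ι) :
    galoisMap k H (x ⊗ₜ y) = ∑ i ∈ r.index, (x * r.left i) ⊗ₜ r.right i := by
  simp [galoisMap, ← r.eq, tmul_sum]

lemma galoisMapInv_tmul (x y : H) (r : Repr k y ι) :
    galoisMapInv k H (x ⊗ₜ y) = ∑ i ∈ r.index, (x * antipode k (r.left i)) ⊗ₜ r.right i := by
  simp [galoisMapInv, ← r.eq, tmul_sum]

lemma galoisMap_galoisMapInv (z : H ⊗[k] H) : galoisMap k H (galoisMapInv k H z) = z := by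
  induction z using TensorProduct.induction_on with
  | zero => simp
  | add u v hu hv => rw [map_add, map_add, hu, hv]
  | tmul x y =>
    have h := Bialgebra.sum_sum_tmul_eq_one_tmul (f := mul' k H ∘ₗ rTensor H (antipode k))
      mul_antipode_rTensor_comul (ℛ k y) fun i ↦ ℛ k _
    apply_fun rTensor H (mulLeft k x) at h
    simpa [galoisMapInv_tmul _ _ (ℛ k y), galoisMap_tmul _ _ (ℛ k _), mul_assoc] using h

lemma galoisMapInv_tmul_mul (x y b : H) (ry : Repr k y ι) (rb : Repr k b κ) :
    galoisMapInv k H (x ⊗ₜ (y * b)) = ∑ i ∈ ry.index, ∑ l ∈ rb.index,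
      (x * antipode k (rb.left l) * antipode k (ry.left i)) ⊗ₜ (ry.right i * rb.right l) := by
  rw [galoisMapInv_tmul _ _ (ry.mul rb), Repr.mul_index, Finset.sum_product]
  simp [antipode_mul_antidistrib, mul_assoc]

lemma galoisMapInv_mul_comul (z : H ⊗[k] H) (h : H) :
    galoisMapInv k H (z * comul h) = galoisMapInv k H z * (1 ⊗ₜ h) := by
  induction z using TensorProduct.induction_on with
  | zero => simp
  | add u v hu hv => simp [add_mul, hu, hv]
  | tmul x y =>
    let rh := ℛ k h
    let ry := ℛ k y
    have hA := Bialgebra.sum_sum_tmul_eq_one_tmul (f := mul' k H ∘ₗ lTensor H (antipode k))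
      mul_antipode_lTensor_comul rh fun j ↦ ℛ k (rh.right j)
    calc galoisMapInv k H (x ⊗ₜ y * comul h)
        = ∑ i ∈ ry.index, ∑ j ∈ rh.index, ∑ l ∈ (ℛ k (rh.right j)).index,
            (x * rh.left j * antipode k ((ℛ k (rh.right j)).left l) * antipode k (ry.left i))
              ⊗ₜ (ry.right i * (ℛ k (rh.right j)).right l) := by
          rw [← rh.eq, Finset.mul_sum, map_sum, Finset.sum_comm]
          simp only [Algebra.TensorProduct.tmul_mul_tmul]
          exact Finset.sum_congr rfl fun j _ ↦ galoisMapInv_tmul_mul _ _ _ ry _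
      _ = ∑ i ∈ ry.index, (x * antipode k (ry.left i)) ⊗ₜ (ry.right i * h) := by
          refine Finset.sum_congr rfl fun i _ ↦ ?_
          apply_fun map (mulRight k (antipode k (ry.left i)) ∘ₗ mulLeft k x)
            (mulLeft k (ry.right i)) at hA
          simpa [mul_assoc] using hA
      _ = galoisMapInv k H (x ⊗ₜ y) * (1 ⊗ₜ h) := by
          simp [galoisMapInv_tmul _ _ ry, Finset.sum_mul, Algebra.TensorProduct.tmul_mul_tmul]

end HopfAlgebra

section Module

variable {k H M : Type*} [CommSemiring k] [Semiring H] [HopfAlgebra k H]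
  [AddCommMonoid M] [Module k M] [Module H M] [IsScalarTower k H M]

variable (H) in
def lTensorSmul : M →ₗ[k] H ⊗[k] H →ₗ[k] H ⊗[k] M :=
  lTensorHom H ∘ₗ (Algebra.lsmul k k M).toLinearMap.flip

@[simp] lemma lTensorSmul_tmul (n : M) (u v : H) :
    lTensorSmul H n (u ⊗ₜ[k] v) = u ⊗ₜ (v • n) := rfl

lemma lTensorSmul_mul_one_tmul (n : M) (w : H ⊗[k] H) (h : H) :
    lTensorSmul H n (w * (1 ⊗ₜ h)) = lTensorSmul H (h • n) w := by
  induction w using TensorProduct.induction_on with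
  | zero => simp
  | add u v hu hv => simp [add_mul, hu, hv]
  | tmul u v => simp [Algebra.TensorProduct.tmul_mul_tmul, mul_smul]

lemma lTensorSmul_injective [Module.Flat k H] {m : M}
    (hm : Function.Injective fun h : H ↦ h • m) : Function.Injective (lTensorSmul H m (k := k)) :=
  Module.Flat.lTensor_preserves_injective_linearMap ((Algebra.lsmul k k M).toLinearMap.flip m) hm

variable (k H M) in
def pseudoTensorToTensor : (H ⊗[k] H) ⊗[k] M →ₗ[k] H ⊗[k] M :=
  lift ((lTensorSmul H).compl₂ (galoisMapInv k H)).flip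

@[simp] lemma pseudoTensorToTensor_tmul (z : H ⊗[k] H) (n : M) :
    pseudoTensorToTensor k H M (z ⊗ₜ n) = lTensorSmul H n (galoisMapInv k H z) := rfl

end Module

lemma pseudoRel_le_ker {k H M : Type*} [CommRing k] [Ring H] [HopfAlgebra k H]
    [AddCommGroup M] [Module k M] [Module H M] [IsScalarTower k H M] :
    pseudoRel k H M ≤ ker (pseudoTensorToTensor k H M) := by
  rw [pseudoRel, Submodule.span_le]
  rintro _ ⟨α, h, n, rfl⟩
  simp [galoisMapInv_mul_comul, lTensorSmul_mul_one_tmul]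

theorem stmt_3_general (k H M : Type*) [Field k] [Ring H] [HopfAlgebra k H]
    [AddCommGroup M] [Module k M] [Module H M] [IsScalarTower k H M]
    (α : H ⊗[k] H) (m : M) (hm : ∀ h : H, h • m = 0 → h = 0) :
    (Submodule.Quotient.mk (α ⊗ₜ[k] m)
        = (0 : ((H ⊗[k] H) ⊗[k] M) ⧸ pseudoRel k H M)) ↔ α = 0 := by
  refine ⟨fun h0 ↦ ?_, fun hα ↦ by rw [hα, zero_tmul, Submodule.Quotient.mk_zero]⟩
  have hT : lTensorSmul H m (galoisMapInv k H α) = 0 :=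
    pseudoRel_le_ker ((Submodule.Quotient.mk_eq_zero _).mp h0)
  have hinj : Function.Injective fun h : H ↦ h • m :=
    (injective_iff_map_eq_zero (LinearMap.toSpanSingleton H M m)).mpr hm
  rw [← galoisMap_galoisMapInv α, (map_eq_zero_iff _ (lTensorSmul_injective hinj)).mp hT, map_zero]

/-- for a cocommutative Hopf algebra `H` over a field `k`, an `H`-module
`M`, `α ∈ H ⊗ H` and `m ∈ M` not a torsion element (`h • m = 0 → h = 0`), one has
`α ⊗_H m = 0` in `(H ⊗ H) ⊗_H M` if and only if `α = 0`. -/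
theorem stmt_3 (k H M : Type*) [Field k] [Ring H] [HopfAlgebra k H]
    [AddCommGroup M] [Module k M] [Module H M] [IsScalarTower k H M]
    (hcocomm : (TensorProduct.comm k H H).toLinearMap ∘ₗ Coalgebra.comul
      = (Coalgebra.comul (R := k) (A := H)))
    (α : H ⊗[k] H) (m : M) (hm : ∀ h : H, h • m = 0 → h = 0) :
    (Submodule.Quotient.mk (α ⊗ₜ[k] m)
        = (0 : ((H ⊗[k] H) ⊗[k] M) ⧸ pseudoRel k H M)) ↔ α = 0 :=
  stmt_3_general k H M α m hm
end

section
/- Let L be a finite Lie conformal algebra over C[∂] (i.e., finitely generated as a C[∂]-module). Then the lower central series L = L⁽⁰⁾ ⊇ L^[1] ⊇ L^[2] ⊇ ⋯, defined by L^[n+1] = [L, L^[n]], stabilizes: there exists n such that L^[n] = L^[m] for all m ≥ n. -/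
/-!
The ranks of the `ℂ[∂]`-modules `L^[n]` form a non-increasing sequence of cardinals, so two
consecutive ones agree, and since they are finite, `L^[n]/L^[n+1]` is then torsion. Torsion is
invisible to the bracket: the `b` with `[A_λ b] ⊆ M[λ]` form a submodule `M'` with
`p(∂) b ∈ M' → b ∈ M'` for `p ≠ 0`. For `p = ∂ - z` this follows from
`a_(n+1) ((∂ - z) b) = (∂ - z) (a_(n+1) b) + (n+1) a_(n) b` by descending induction on `n`
(locality starts it), and `ℂ` is algebraically closed. Hence `L^[n+2] = L^[n+1]`, after which the
series is constant.
-/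

open Polynomial

/-- A Lie conformal algebra over `ℂ[∂]`, presented via its `n`-th products
`a_(n) b` (the coefficients of the `λ`-bracket `[a_λ b] = Σ λⁿ/n! a_(n) b`). -/
class LieConformalAlgebra (L : Type*) [AddCommGroup L] [Module ℂ L]
    [Module ℂ[X] L] [IsScalarTower ℂ ℂ[X] L] where
  nProd : ℕ → L →ₗ[ℂ] L →ₗ[ℂ] L
  locality : ∀ a b : L, ∃ N : ℕ, ∀ n ≥ N, nProd n a b = 0
  sesq_left : ∀ (n : ℕ) (a b : L),
    nProd n ((X : ℂ[X]) • a) b = (-(n : ℂ)) • nProd (n - 1) a b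
  sesq_right : ∀ (n : ℕ) (a b : L),
    nProd n a ((X : ℂ[X]) • b)
      = (X : ℂ[X]) • nProd n a b + (n : ℂ) • nProd (n - 1) a b
  skew : ∀ (n : ℕ) (a b : L), ∃ N₀ : ℕ, ∀ N ≥ N₀,
    nProd n a b = -∑ j ∈ Finset.range N,
      (((-1 : ℂ) ^ (n + j)) * ((j.factorial : ℂ))⁻¹) •
        ((X : ℂ[X]) ^ j • nProd (n + j) b a)
  jacobi : ∀ (m n : ℕ) (a b c : L),
    nProd m a (nProd n b c) - nProd n b (nProd m a c)
      = ∑ j ∈ Finset.range (m + 1),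
          ((m.choose j : ℂ)) • nProd (m + n - j) (nProd j a b) c

namespace LieConformalAlgebra

variable {L : Type*} [AddCommGroup L] [Module ℂ L]
  [Module ℂ[X] L] [IsScalarTower ℂ ℂ[X] L] [LieConformalAlgebra L]

/-- `[A, B]`: the `ℂ[∂]`-submodule generated by all `n`-th products of elements of `A`
and `B` (i.e. by all coefficients of `λ`-brackets). -/
noncomputable def bracketSub (A B : Submodule ℂ[X] L) : Submodule ℂ[X] L :=
  Submodule.span ℂ[X]
    {x | ∃ (n : ℕ) (a b : L), a ∈ A ∧ b ∈ B ∧ x = nProd n a b}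

/-- The central series `L^[0] = L`, `L^[n+1] = [L, L^[n]]`. -/
noncomputable def lcs : ℕ → Submodule ℂ[X] L
  | 0 => ⊤
  | n + 1 => bracketSub ⊤ (lcs n)

end LieConformalAlgebra

open Cardinal

theorem Submodule.exists_smul_mem_of_le_of_rank_eq {R M : Type*} [CommRing R] [IsDomain R]
    [AddCommGroup M] [Module R M] {A B : Submodule R M} (hAB : A ≤ B)
    (hrank : Module.rank R A = Module.rank R B) (hfin : Module.rank R B < ℵ₀)
    {x : M} (hx : x ∈ B) : ∃ r : R, r ≠ 0 ∧ r • x ∈ A := by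
  set A' : Submodule R B := A.comap B.subtype
  have hA' : Module.rank R A' = Module.rank R B := by
    rw [← hrank]; exact (Submodule.comapSubtypeEquivOfLe hAB).rank_eq
  have hquot : Module.rank R (B ⧸ A') = 0 := by
    refine Cardinal.eq_of_add_eq_add_right (b := Module.rank R A') ?_ (hA' ▸ hfin)
    rw [Submodule.rank_quotient_add_rank, hA', zero_add]
  obtain ⟨r, hr, hrx⟩ := rank_eq_zero_iff.mp hquot (Submodule.Quotient.mk ⟨x, hx⟩)
  rw [← Submodule.Quotient.mk_smul, Submodule.Quotient.mk_eq_zero] at hrx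
  exact ⟨r, hr, hrx⟩

namespace LieConformalAlgebra

variable {L : Type*} [AddCommGroup L] [Module ℂ L] [Module ℂ[X] L] [IsScalarTower ℂ ℂ[X] L]
  [LieConformalAlgebra L]

theorem nProd_X_sub_C_smul (n : ℕ) (a b : L) (z : ℂ) :
    nProd n a ((X - C z) • b) = (X - C z) • nProd n a b + (n : ℂ) • nProd (n - 1) a b := by
  rw [sub_smul, sub_smul, map_sub, sesq_right, ← algebraMap_eq, algebraMap_smul,
    algebraMap_smul, map_smul]
  abel

def bracketColon (A M : Submodule ℂ[X] L) : Submodule ℂ[X] L where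
  carrier := {b | ∀ a ∈ A, ∀ n, nProd n a b ∈ M}
  add_mem' hb hc a ha n := by
    rw [map_add]; exact M.add_mem (hb a ha n) (hc a ha n)
  zero_mem' a _ n := by
    rw [map_zero]; exact M.zero_mem
  smul_mem' p b hb := by
    induction p using Polynomial.induction_on with
    | C c =>
      intro a ha n
      rw [← algebraMap_eq, algebraMap_smul, map_smul]
      exact M.smul_of_tower_mem c (hb a ha n)
    | add p q hp hq =>
      intro a ha n
      rw [add_smul, map_add]
      exact M.add_mem (hp a ha n) (hq a ha n)
    | monomial k c ih =>
      intro a ha n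
      rw [pow_succ', mul_left_comm, mul_smul, sesq_right]
      exact M.add_mem (M.smul_mem X (ih a ha n)) (M.smul_of_tower_mem _ (ih a ha (n - 1)))

theorem mem_bracketColon_of_X_sub_C_smul_mem {A M : Submodule ℂ[X] L} {b : L} {z : ℂ}
    (h : (X - C z) • b ∈ bracketColon A M) : b ∈ bracketColon A M := by
  intro a ha n
  obtain ⟨N, hN⟩ := locality a b
  rcases le_total N n with hn | hn
  · rw [hN n hn]; exact M.zero_mem
  induction hn using Nat.decreasingInduction with
  | self => rw [hN N le_rfl]; exact M.zero_mem
  | of_succ k _ hk =>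
    have hsucc := h a ha (k + 1)
    rw [nProd_X_sub_C_smul, Nat.add_sub_cancel] at hsucc
    have := M.sub_mem hsucc (M.smul_mem (X - C z) hk)
    rw [add_sub_cancel_left] at this
    exact ((M.restrictScalars ℂ).smul_mem_iff (Nat.cast_ne_zero.mpr k.succ_ne_zero)).mp this

theorem mem_bracketColon_of_smul_mem {A M : Submodule ℂ[X] L} {b : L} {p : ℂ[X]} (hp : p ≠ 0)
    (h : p • b ∈ bracketColon A M) : b ∈ bracketColon A M := by
  rw [← C_leadingCoeff_mul_prod_multiset_X_sub_C (p := p) IsAlgClosed.card_roots_eq_natDegree,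
    mul_smul,
    Submodule.smul_mem_iff_of_isUnit _ (isUnit_C.mpr (leadingCoeff_ne_zero.mpr hp).isUnit)] at h
  generalize p.roots = s at h
  induction s using Multiset.induction_on generalizing b with
  | empty => simpa using h
  | cons z s ih =>
    rw [Multiset.map_cons, Multiset.prod_cons, mul_comm, mul_smul] at h
    exact mem_bracketColon_of_X_sub_C_smul_mem (ih h)

theorem bracketSub_le_iff {A B M : Submodule ℂ[X] L} :
    bracketSub A B ≤ M ↔ B ≤ bracketColon A M := by
  rw [bracketSub, Submodule.span_le]
  constructor
  · intro h b hb a ha n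
    exact h ⟨n, a, b, ha, hb, rfl⟩
  · rintro h _ ⟨n, a, b, ha, hb, rfl⟩
    exact h hb a ha n

theorem bracketSub_le_bracketSub_of_exists_smul_mem {A B B' : Submodule ℂ[X] L}
    (h : ∀ x ∈ B, ∃ p : ℂ[X], p ≠ 0 ∧ p • x ∈ B') :
    bracketSub A B ≤ bracketSub A B' := by
  have hB' : B' ≤ bracketColon A (bracketSub A B') := bracketSub_le_iff.mp le_rfl
  refine bracketSub_le_iff.mpr fun x hx => ?_
  obtain ⟨p, hp, hpx⟩ := h x hx
  exact mem_bracketColon_of_smul_mem hp (hB' hpx)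

theorem bracketSub_mono {A B B' : Submodule ℂ[X] L} (h : B ≤ B') :
    bracketSub A B ≤ bracketSub A B' :=
  bracketSub_le_bracketSub_of_exists_smul_mem fun x hx =>
    ⟨1, one_ne_zero, by rw [one_smul]; exact h hx⟩

theorem lcs_antitone : Antitone (lcs (L := L)) := by
  refine antitone_nat_of_succ_le fun n => ?_
  induction n with
  | zero => exact le_top
  | succ n ih => exact bracketSub_mono ih

theorem lcs_eq_of_lcs_succ_eq {n : ℕ} (h : lcs (L := L) (n + 1) = lcs n) :
    ∀ m, n ≤ m → lcs (L := L) m = lcs n := by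
  intro m hm
  induction m, hm using Nat.le_induction with
  | base => rfl
  | succ m _ ih => exact (congrArg (bracketSub ⊤) ih).trans h

theorem lcs_add_two_eq_of_rank_eq {n : ℕ}
    (hrank : Module.rank ℂ[X] (lcs (L := L) (n + 1)) = Module.rank ℂ[X] (lcs (L := L) n))
    (hfin : Module.rank ℂ[X] (lcs (L := L) n) < ℵ₀) : lcs (L := L) (n + 2) = lcs (n + 1) :=
  (lcs_antitone (Nat.le_succ _)).antisymm <| bracketSub_le_bracketSub_of_exists_smul_mem
    fun _ hx =>
      Submodule.exists_smul_mem_of_le_of_rank_eq (lcs_antitone (Nat.le_succ n)) hrank hfin hx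

end LieConformalAlgebra

open LieConformalAlgebra in
/-- the central series of a finite Lie conformal algebra over `ℂ[∂]`
stabilizes. -/
theorem stmt_5 (L : Type*) [AddCommGroup L] [Module ℂ L]
    [Module ℂ[X] L] [IsScalarTower ℂ ℂ[X] L] [LieConformalAlgebra L]
    [Module.Finite ℂ[X] L] :
    ∃ n : ℕ, ∀ m : ℕ, n ≤ m → lcs (L := L) m = lcs (L := L) n := by
  obtain ⟨n, hn⟩ := WellFoundedLT.antitone_chain_condition
    (f := fun n => Module.rank ℂ[X] (lcs (L := L) n))
    fun _ _ h => Submodule.rank_mono (lcs_antitone h)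
  have hfin : Module.rank ℂ[X] (lcs (L := L) n) < ℵ₀ :=
    (Submodule.rank_le _).trans_lt (Module.rank_lt_aleph0 _ _)
  have hstable : lcs (L := L) (n + 2) = lcs (n + 1) :=
    lcs_add_two_eq_of_rank_eq (hn (n + 1) n.le_succ).symm hfin
  exact ⟨n + 1, lcs_eq_of_lcs_succ_eq hstable⟩
end

section
/- Let L be a Lie conformal algebra over C[∂] and M a finite L-module. For φ ∈ Hom_{C[∂]}(L, C[∂]), define M^φ_{−1} = 0 and M^φ_{i+1} = C[∂]-span of {m ∈ M : a_λ m − φ(a)(−λ)·m ∈ M^φ_i[λ] for all a ∈ L}. Then the increasing chain of C[∂]-submodules M^φ_i stabilizes to an L-submodule M^φ of M. -/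
open Polynomial

/-- A module over the Lie conformal algebra `L`, presented via mode actions
`a_(n) : M → M` (coefficients of the `λ`-action `a_λ m = Σ λⁿ/n! a_(n) m`). -/
class LCModule (L M : Type*) [AddCommGroup L] [Module ℂ L]
    [Module ℂ[X] L] [IsScalarTower ℂ ℂ[X] L] [LieConformalAlgebra L]
    [AddCommGroup M] [Module ℂ M] [Module ℂ[X] M] [IsScalarTower ℂ ℂ[X] M] where
  act : ℕ → L →ₗ[ℂ] M →ₗ[ℂ] M
  locality : ∀ (a : L) (m : M), ∃ N : ℕ, ∀ n ≥ N, act n a m = 0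
  sesq_left : ∀ (n : ℕ) (a : L) (m : M),
    act n ((X : ℂ[X]) • a) m = (-(n : ℂ)) • act (n - 1) a m
  sesq_right : ∀ (n : ℕ) (a : L) (m : M),
    act n a ((X : ℂ[X]) • m)
      = (X : ℂ[X]) • act n a m + (n : ℂ) • act (n - 1) a m
  jacobi : ∀ (p q : ℕ) (a b : L) (v : M),
    act p a (act q b v) - act q b (act p a v)
      = ∑ j ∈ Finset.range (p + 1),
          ((p.choose j : ℂ)) • act (p + q - j) (LieConformalAlgebra.nProd j a b) v

open LieConformalAlgebra LCModule

variable {L M : Type*} [AddCommGroup L] [Module ℂ L]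
  [Module ℂ[X] L] [IsScalarTower ℂ ℂ[X] L] [LieConformalAlgebra L]
  [AddCommGroup M] [Module ℂ M] [Module ℂ[X] M] [IsScalarTower ℂ ℂ[X] M]
  [LCModule L M]

/-- The scalar by which `a_(n)` acts on a `φ`-weight vector: the mode form of
`a_λ m = φ(a)(−λ)·m` is `a_(n) m = n!·(−1)ⁿ·(coefficient of ∂ⁿ in φ(a))·m`. -/
noncomputable def wtScalar (φ : L →ₗ[ℂ[X]] ℂ[X]) (a : L) (n : ℕ) : ℂ :=
  (n.factorial : ℂ) * (-1 : ℂ) ^ n * (φ a).coeff n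

/-- The chain of generalized weight submodules: `M^φ_{-1} = 0` (indexed here by `0`)
and `M^φ_{i+1}` is the `ℂ[∂]`-span of `{m : a_λ m − φ(a)(−λ)·m ∈ M^φ_i[λ] ∀ a}`. -/
noncomputable def genWt (φ : L →ₗ[ℂ[X]] ℂ[X]) : ℕ → Submodule ℂ[X] M
  | 0 => ⊥
  | i + 1 => Submodule.span ℂ[X]
      {m : M | ∀ (a : L) (n : ℕ), act n a m - wtScalar φ a n • m ∈ genWt φ i}

namespace LCModule

variable (L) in
def comapAct (N : Submodule ℂ[X] M) : Submodule ℂ[X] M where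
  carrier := {m | ∀ (n : ℕ) (a : L), act n a m ∈ N}
  zero_mem' n a := by simp only [map_zero, N.zero_mem]
  add_mem' hm hm' n a := by simpa only [map_add] using N.add_mem (hm n a) (hm' n a)
  smul_mem' p m hm := by
    induction p using Polynomial.induction_on with
    | C c =>
      intro n a
      rw [← Polynomial.algebraMap_eq, algebraMap_smul, map_smul]
      exact N.smul_of_tower_mem c (hm n a)
    | add p q hp hq =>
      intro n a
      rw [add_smul, map_add]
      exact N.add_mem (hp n a) (hq n a)
    | monomial j c hj =>
      intro n a
      have hX : (C c * X ^ (j + 1)) • m = (X : ℂ[X]) • (C c * X ^ j) • m := by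
        rw [← mul_smul, pow_succ, mul_comm X, mul_assoc]
      rw [hX, sesq_right]
      exact N.add_mem (N.smul_mem X (hj n a)) (N.smul_of_tower_mem _ (hj (n - 1) a))

end LCModule

theorem genWt_le_genWt_succ (φ : L →ₗ[ℂ[X]] ℂ[X]) (i : ℕ) :
    genWt (M := M) φ i ≤ genWt φ (i + 1) := by
  induction i with
  | zero => exact bot_le
  | succ i ih => exact Submodule.span_mono fun m hm a n => ih (hm a n)

theorem genWt_monotone (φ : L →ₗ[ℂ[X]] ℂ[X]) : Monotone (genWt (M := M) φ) :=
  monotone_nat_of_le_succ (genWt_le_genWt_succ φ)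

/-- No stabilization is needed: on a generator `m` of `M^φ_{i+1}`, `a_(n) m` differs from
the multiple `wtScalar φ a n • m` by an element of `M^φ_i ≤ M^φ_{i+1}`. -/
theorem act_mem_genWt (φ : L →ₗ[ℂ[X]] ℂ[X]) {i : ℕ} {m : M} (hm : m ∈ genWt φ i)
    (n : ℕ) (a : L) : act n a m ∈ genWt φ i := by
  revert m n a
  cases i with
  | zero =>
    intro m hm n a
    rw [genWt, Submodule.mem_bot] at hm ⊢
    rw [hm, map_zero]
  | succ i =>
    show genWt φ (i + 1) ≤ LCModule.comapAct L (genWt φ (i + 1))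
    refine Submodule.span_le.mpr fun m hm n a => ?_
    have hm_mem : m ∈ genWt φ (i + 1) := Submodule.subset_span hm
    rw [← sub_add_cancel (act n a m) (wtScalar φ a n • m)]
    exact Submodule.add_mem _ (genWt_le_genWt_succ φ i (hm a n))
      (Submodule.smul_of_tower_mem _ _ hm_mem)

/-- for a finite `L`-module `M`, the increasing chain `M^φ_i` of
generalized weight submodules stabilizes to an `L`-submodule `M^φ` of `M`. -/
theorem stmt_17 [Module.Finite ℂ[X] M] (φ : L →ₗ[ℂ[X]] ℂ[X]) :
    Monotone (genWt (L := L) (M := M) φ) ∧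
    ∃ k : ℕ, (∀ j : ℕ, k ≤ j → genWt (L := L) (M := M) φ j = genWt (L := L) (M := M) φ k) ∧
      (∀ (n : ℕ) (a : L), ∀ m ∈ genWt (L := L) (M := M) φ k,
        act (M := M) n a m ∈ genWt (L := L) (M := M) φ k) := by
  refine ⟨genWt_monotone φ, ?_⟩
  obtain ⟨k, hk⟩ := monotone_stabilizes_iff_noetherian.mpr inferInstance
    ⟨genWt (L := L) (M := M) φ, genWt_monotone φ⟩
  exact ⟨k, fun j hj => (hk j hj).symm, fun n a m hm => act_mem_genWt φ hm n a⟩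
end
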